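/- arXiv:2011.01726 — 6 statements merged into one kernel-verified Lean document; each statement's English description precedes it below -/
import Mathlib

section
/- Let T be a finite rooted tree with t ≥ 1 leaves in which no vertex has exactly one child. Then g(T) ≤ log₂(t) + 1; in particular, the expected length of a random root-to-leaf walk in an n-vertex such tree is O(log n). -/
/-!
Every vertex on the path from the root to a leaf `l` has at least two children, so the walk
reaches `l` with probability `p_l ≤ 2^(-depth l)`, i.e. `depth l ≤ log₂ (1 / p_l)`. The `p_l`
sum to `1`, hence `g(T) ≤ ∑ p_l log₂ (1 / p_l)`, the entropy of the exit distribution, which is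
at most `log₂ t` by Jensen's inequality for the concave logarithm.
-/

attribute [local instance] Classical.propDecidable

/-- A finite rooted tree, encoded by a parent function together with a depth
function recording the graph distance to the root. -/
structure FiniteRootedTree where
  V : Type
  fintypeV : Fintype V
  root : V
  parent : V → V
  depth : V → ℕ
  depth_root : depth root = 0
  depth_parent : ∀ v, v ≠ root → depth v = depth (parent v) + 1
  root_of_depth_zero : ∀ v, depth v = 0 → v = root

attribute [instance] FiniteRootedTree.fintypeV

namespace FiniteRootedTree

/-- `u` is a child of `v`. -/
def IsChild (T : FiniteRootedTree) (u v : T.V) : Prop :=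
  u ≠ T.root ∧ T.parent u = v

/-- The number of children of `v`. -/
noncomputable def numChildren (T : FiniteRootedTree) (v : T.V) : ℕ :=
  Set.ncard {u : T.V | T.IsChild u v}

/-- A leaf is a vertex with no children. -/
def IsLeaf (T : FiniteRootedTree) (v : T.V) : Prop :=
  ∀ u, ¬ T.IsChild u v

/-- The finset of leaves of `T`. -/
noncomputable def leaves (T : FiniteRootedTree) : Finset T.V :=
  Finset.univ.filter fun v => T.IsLeaf v

/-- Probability that the random root-to-leaf walk ends at the leaf `l`:
the product of `1 / c(v)` over the vertices `v ≠ l` on the root-to-`l` path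
(equivalently, over the strict ancestors `parent^[k+1] l` of `l`). -/
noncomputable def leafProb (T : FiniteRootedTree) (l : T.V) : ℝ :=
  ∏ k ∈ Finset.range (T.depth l), (1 : ℝ) / (T.numChildren (T.parent^[k + 1] l))

/-- The expected length of the random root-to-leaf walk in `T`. -/
noncomputable def g (T : FiniteRootedTree) : ℝ :=
  ∑ l ∈ T.leaves, (T.depth l : ℝ) * T.leafProb l

/-- The number of vertices of the subtree of `T` rooted at `v`, i.e. the number
of vertices `u` having `v` as an ancestor (including `v` itself). -/
noncomputable def subtreeSize (T : FiniteRootedTree) (v : T.V) : ℕ :=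
  Set.ncard {u : T.V | ∃ k : ℕ, T.parent^[k] u = v}

end FiniteRootedTree

/-- The truncations of `T₁` and `T₂` at level `h` (the rooted trees induced on
the vertices of depth at most `h`) are isomorphic as rooted trees. -/
def TruncIso (T₁ T₂ : FiniteRootedTree) (h : ℕ) : Prop :=
  ∃ φ : {v : T₁.V // T₁.depth v ≤ h} ≃ {v : T₂.V // T₂.depth v ≤ h},
    (φ ⟨T₁.root, by simp [T₁.depth_root]⟩).val = T₂.root ∧
    ∀ u u' : {v : T₁.V // T₁.depth v ≤ h},
      T₁.IsChild u'.val u.val ↔ T₂.IsChild (φ u').val (φ u).val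

/-- `InjM h U` is the set of root-respecting injective homomorphisms from the
rooted tree `U` into the complete binary tree `M_h`, whose vertices are the
boolean lists of length at most `h`, rooted at the empty list, with the
children of a list being its two one-element extensions. -/
def InjM (h : ℕ) (U : FiniteRootedTree) : Set (U.V → List Bool) :=
  {α | Function.Injective α ∧ (∀ u, (α u).length ≤ h) ∧ α U.root = [] ∧
    ∀ u u' : U.V, U.IsChild u' u → ∃ b : Bool, α u' = α u ++ [b]}

theorem Real.sum_mul_log_inv_le_log_card {ι : Type*} (s : Finset ι) (p : ι → ℝ)
    (hp : ∀ i ∈ s, 0 < p i) (hsum : ∑ i ∈ s, p i = 1) :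
    ∑ i ∈ s, p i * Real.log (p i)⁻¹ ≤ Real.log s.card := by
  have hjensen := strictConcaveOn_log_Ioi.concaveOn.le_map_sum (fun i hi => (hp i hi).le) hsum
    (p := fun i => (p i)⁻¹) fun i hi => Set.mem_Ioi.2 (inv_pos.2 (hp i hi))
  have hmass : ∑ i ∈ s, p i * (p i)⁻¹ = s.card := by
    rw [Finset.card_eq_sum_ones, Nat.cast_sum, Nat.cast_one]
    exact Finset.sum_congr rfl fun i hi => mul_inv_cancel₀ (hp i hi).ne'
  simp only [smul_eq_mul, hmass] at hjensen
  exact hjensen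

namespace FiniteRootedTree

variable (T : FiniteRootedTree)

noncomputable def childrenFinset (v : T.V) : Finset T.V :=
  Finset.univ.filter fun u => T.IsChild u v

@[simp]
theorem mem_childrenFinset {u v : T.V} : u ∈ T.childrenFinset v ↔ T.IsChild u v := by
  simp [childrenFinset]

theorem numChildren_eq_card_childrenFinset (v : T.V) :
    T.numChildren v = (T.childrenFinset v).card := by
  rw [numChildren, childrenFinset, Set.ncard_eq_toFinset_card']
  simp

theorem isLeaf_iff_childrenFinset_eq_empty (v : T.V) :
    T.IsLeaf v ↔ T.childrenFinset v = ∅ := by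
  simp [IsLeaf, childrenFinset, Finset.filter_eq_empty_iff]

theorem depth_parent_iterate {k : ℕ} {v : T.V} (hk : k ≤ T.depth v) :
    T.depth (T.parent^[k] v) = T.depth v - k := by
  induction k with
  | zero => simp
  | succ k ih =>
    have hdepth := ih (by omega)
    have hne : T.parent^[k] v ≠ T.root := by
      intro h
      rw [h, T.depth_root] at hdepth
      omega
    rw [Function.iterate_succ_apply']
    have := T.depth_parent _ hne
    omega

theorem isChild_parent_iterate {v : T.V} {k : ℕ} (hk : k < T.depth v) :
    T.IsChild (T.parent^[k] v) (T.parent^[k + 1] v) := by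
  refine ⟨fun h => ?_, (Function.iterate_succ_apply' _ _ _).symm⟩
  have hdepth := T.depth_parent_iterate hk.le
  rw [h, T.depth_root] at hdepth
  omega

theorem numChildren_pos_of_isChild {u v : T.V} (h : T.IsChild u v) : 0 < T.numChildren v := by
  rw [numChildren_eq_card_childrenFinset]
  exact Finset.card_pos.2 ⟨u, T.mem_childrenFinset.2 h⟩

theorem leafProb_root : T.leafProb T.root = 1 := by
  simp [leafProb, T.depth_root]

theorem leafProb_factor_pos {v : T.V} {k : ℕ} (hk : k ∈ Finset.range (T.depth v)) :
    0 < (1 : ℝ) / T.numChildren (T.parent^[k + 1] v) :=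
  one_div_pos.2 <| Nat.cast_pos.2 <|
    T.numChildren_pos_of_isChild (T.isChild_parent_iterate (Finset.mem_range.1 hk))

theorem leafProb_pos (v : T.V) : 0 < T.leafProb v :=
  Finset.prod_pos fun _ hk => T.leafProb_factor_pos hk

theorem leafProb_of_isChild {u v : T.V} (h : T.IsChild u v) :
    T.leafProb u = T.leafProb v / T.numChildren v := by
  have hdepth : T.depth u = T.depth v + 1 := by rw [T.depth_parent u h.1, h.2]
  have hancestor : ∀ k, T.parent^[k + 1] u = T.parent^[k] v := fun k => by
    rw [Function.iterate_succ_apply, h.2]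
  rw [leafProb, leafProb, hdepth, Finset.prod_range_succ']
  simp only [hancestor, Function.iterate_zero_apply]
  ring

theorem sum_leafProb_childrenFinset {v : T.V} (hv : ¬ T.IsLeaf v) :
    ∑ u ∈ T.childrenFinset v, T.leafProb u = T.leafProb v := by
  have hc : (T.numChildren v : ℝ) ≠ 0 := by
    rw [numChildren_eq_card_childrenFinset, Nat.cast_ne_zero, Ne, Finset.card_eq_zero,
      ← isLeaf_iff_childrenFinset_eq_empty]
    exact hv
  rw [Finset.sum_congr rfl fun u hu => T.leafProb_of_isChild (T.mem_childrenFinset.1 hu),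
    Finset.sum_const, ← numChildren_eq_card_childrenFinset, nsmul_eq_mul]
  field_simp

/-- Grouped by their parents, the non-root vertices carry the same mass as the inner vertices;
adding the root, of mass `1`, to both sides leaves the leaves with mass `1`. -/
theorem sum_leafProb_leaves : ∑ l ∈ T.leaves, T.leafProb l = 1 := by
  have hgroup : ∑ v ∈ Finset.univ.erase T.root, T.leafProb v
      = ∑ w ∈ Finset.univ.filter (¬ T.IsLeaf ·), T.leafProb w := by
    rw [← Finset.sum_fiberwise (Finset.univ.erase T.root) T.parent, Finset.sum_filter]
    refine Finset.sum_congr rfl fun w _ => ?_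
    have hfiber : (Finset.univ.erase T.root).filter (T.parent · = w) = T.childrenFinset w := by
      ext u
      simp [IsChild]
    rw [hfiber]
    split_ifs with hw
    · rw [(T.isLeaf_iff_childrenFinset_eq_empty w).1 hw, Finset.sum_empty]
    · exact T.sum_leafProb_childrenFinset hw
  have htotal := Finset.sum_filter_add_sum_filter_not Finset.univ T.IsLeaf T.leafProb
  rw [← Finset.add_sum_erase _ _ (Finset.mem_univ T.root), hgroup, leafProb_root] at htotal
  rw [leaves]
  linarith

theorem leafProb_le_half_pow (hone : ∀ v : T.V, T.numChildren v ≠ 1) (l : T.V) :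
    T.leafProb l ≤ (1 / 2 : ℝ) ^ T.depth l := by
  rw [leafProb, Finset.pow_eq_prod_const]
  refine Finset.prod_le_prod (fun k hk => (T.leafProb_factor_pos hk).le) fun k hk => ?_
  have hpos := T.numChildren_pos_of_isChild (T.isChild_parent_iterate (Finset.mem_range.1 hk))
  have htwo : (2 : ℝ) ≤ T.numChildren (T.parent^[k + 1] l) := by
    have := hone (T.parent^[k + 1] l)
    exact_mod_cast (show 2 ≤ T.numChildren (T.parent^[k + 1] l) by omega)
  exact one_div_le_one_div_of_le two_pos htwo

theorem depth_le_logb_inv_leafProb (hone : ∀ v : T.V, T.numChildren v ≠ 1) (l : T.V) :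
    (T.depth l : ℝ) ≤ Real.logb 2 (T.leafProb l)⁻¹ := by
  have hpow : (2 : ℝ) ^ T.depth l ≤ (T.leafProb l)⁻¹ := by
    rw [le_inv_comm₀ (by positivity) (T.leafProb_pos l), ← one_div, ← one_div_pow]
    exact T.leafProb_le_half_pow hone l
  calc (T.depth l : ℝ) = Real.logb 2 ((2 : ℝ) ^ T.depth l) := by
        rw [Real.logb_pow, Real.logb_self_eq_one one_lt_two, mul_one]
    _ ≤ Real.logb 2 (T.leafProb l)⁻¹ := Real.logb_le_logb_of_le one_lt_two (by positivity) hpow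

theorem g_le_logb_card_leaves (hone : ∀ v : T.V, T.numChildren v ≠ 1) :
    T.g ≤ Real.logb 2 T.leaves.card :=
  calc T.g ≤ ∑ l ∈ T.leaves, T.leafProb l * Real.logb 2 (T.leafProb l)⁻¹ :=
        Finset.sum_le_sum fun l _ => by
          rw [mul_comm _ (T.leafProb l)]
          exact mul_le_mul_of_nonneg_left (T.depth_le_logb_inv_leafProb hone l)
            (T.leafProb_pos l).le
    _ = (∑ l ∈ T.leaves, T.leafProb l * Real.log (T.leafProb l)⁻¹) / Real.log 2 := by
        simp only [Real.logb, Finset.sum_div, mul_div_assoc]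
    _ ≤ Real.logb 2 T.leaves.card :=
        div_le_div_of_nonneg_right
          (Real.sum_mul_log_inv_le_log_card T.leaves T.leafProb (fun l _ => T.leafProb_pos l)
            T.sum_leafProb_leaves)
          (Real.log_pos one_lt_two).le

end FiniteRootedTree

theorem stmt_0_general (T : FiniteRootedTree)
    (hone : ∀ v : T.V, T.numChildren v ≠ 1) :
    T.g ≤ Real.logb 2 (T.leaves.card) + 1 := by
  linarith [T.g_le_logb_card_leaves hone]

/-- if `T` is a finite rooted tree with `t ≥ 1` leaves in which no
vertex has exactly one child, then `g(T) ≤ log₂ t + 1`. -/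
theorem stmt_0 (T : FiniteRootedTree) (ht : 1 ≤ T.leaves.card)
    (hone : ∀ v : T.V, T.numChildren v ≠ 1) :
    T.g ≤ Real.logb 2 (T.leaves.card) + 1 :=
  stmt_0_general T hone
end

section
/- Let d ≥ 2 and let T₁ and T₂ be finite rooted trees in which every vertex has at most d children and no vertex has exactly one child, and set n = min(|V(T₁)|, |V(T₂)|). Then there exist i ∈ {1,2}, a natural number h, and a vertex v of Tᵢ of depth h such that: (a) the number of vertices of T_{3−i} of depth at most h is at most 4(d+1)·√n, and (b) either the truncations of T₁ and T₂ at level h are not isomorphic as rooted trees, or the subtree of Tᵢ rooted at v has at most 4(d+1)·√n vertices. (Such a pair (v,h) is a balanced split.) -/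
attribute [local instance] Classical.propDecidable

/-!
Let `n` be the size of the smaller tree `T` and `B = 4 (d + 1) √n`, and let `H + 1` be the first
level up to which one of the two trees has more than `B` vertices. If a vertex of `T` of depth at
most `H` has at most `B` descendants, it is a balanced split. Otherwise no vertex of depth at most
`H` is a leaf, so `T` branches there and has at most `2 |level (H + 1)| + 1 ≤ 2 d |level H| + 1`
vertices up to level `H + 1`; and the subtrees rooted at level `H` are disjoint and have more than
`B` vertices each, so `|level H| ≤ n / B + 1`. This makes `T` have at most `B` vertices up to level
`H + 1`, so the other tree is the one with more than `B`: the truncations at level `H + 1` differ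
and any vertex of the other tree at depth `H + 1` is a balanced split.
-/

open Finset

namespace FiniteRootedTree

variable (T : FiniteRootedTree)

lemma depth_iterate_parent (u : T.V) {k : ℕ} (hk : k ≤ T.depth u) :
    T.depth (T.parent^[k] u) = T.depth u - k := by
  induction k with
  | zero => simp
  | succ k ih =>
    have hdk := ih (by omega)
    have hne : T.parent^[k] u ≠ T.root := fun hr => by
      rw [hr, T.depth_root] at hdk
      omega
    have := T.depth_parent _ hne
    rw [Function.iterate_succ_apply']
    omega

lemma iterate_parent_depth (u : T.V) : T.parent^[T.depth u] u = T.root :=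
  T.root_of_depth_zero _ (by rw [T.depth_iterate_parent u le_rfl, Nat.sub_self])

/-- `parent root` is a junk value `e`, so the orbit of `u` under `parent` runs through the
ancestors of `u` and then wraps around through `e` and its ancestors. -/
lemma iterate_parent_eq_or {h : ℕ} (k : ℕ) (u : T.V) (hk : T.depth (T.parent^[k] u) = h) :
    T.parent^[k] u = T.parent^[T.depth u - h] u ∨
      T.parent^[k] u = T.parent^[T.depth (T.parent T.root) - h] (T.parent T.root) := by
  induction k using Nat.strong_induction_on generalizing u with
  | _ k ih =>
    by_cases hku : k ≤ T.depth u
    · rw [T.depth_iterate_parent u hku] at hk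
      exact Or.inl (by rw [show T.depth u - h = k by omega])
    obtain ⟨j, rfl⟩ : ∃ j, k = j + 1 + T.depth u := ⟨k - T.depth u - 1, by omega⟩
    have hwrap : T.parent^[j + 1 + T.depth u] u = T.parent^[j] (T.parent T.root) := by
      rw [Function.iterate_add_apply, T.iterate_parent_depth, Function.iterate_succ_apply]
    rw [hwrap] at hk ⊢
    exact (ih j (by omega) _ hk).elim Or.inr Or.inr

lemma subtreeSize_eq_one_of_isLeaf {v : T.V} (hv : T.IsLeaf v) (he : v ≠ T.parent T.root) :
    T.subtreeSize v = 1 := by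
  have hsub : {u : T.V | ∃ k, T.parent^[k] u = v} = {v} := by
    ext u
    refine ⟨?_, fun hu => ⟨0, hu⟩⟩
    rintro ⟨_ | k, hk⟩
    · exact hk
    rw [Function.iterate_succ_apply'] at hk
    by_cases hroot : T.parent^[k] u = T.root
    · exact absurd (hroot ▸ hk).symm he
    · exact absurd ⟨hroot, hk⟩ (hv _)
  rw [subtreeSize, hsub, Set.ncard_singleton]

lemma subtreeSize_le_card (v : T.V) : T.subtreeSize v ≤ Fintype.card T.V := by
  rw [← Nat.card_eq_fintype_card]
  exact Set.ncard_le_card _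

lemma subtreeSize_le_card_fiber {h : ℕ} {v : T.V} (hvh : T.depth v = h)
    (hv : v ≠ T.parent^[T.depth (T.parent T.root) - h] (T.parent T.root)) :
    T.subtreeSize v ≤ #{u | T.parent^[T.depth u - h] u = v} := by
  rw [subtreeSize, ← Set.ncard_coe_finset]
  refine Set.ncard_le_ncard ?_ (Finset.finite_toSet _)
  rintro u ⟨k, hk⟩
  have := T.iterate_parent_eq_or k u (hk ▸ hvh)
  rw [hk] at this
  simpa using (this.resolve_right hv).symm

noncomputable def level (h : ℕ) : Finset T.V := {v | T.depth v = h}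

noncomputable def verticesUpTo (h : ℕ) : Finset T.V := {v | T.depth v ≤ h}

lemma sum_subtreeSize_level_erase_le (h : ℕ) :
    ∑ v ∈ (T.level h).erase (T.parent^[T.depth (T.parent T.root) - h] (T.parent T.root)),
      T.subtreeSize v ≤ Fintype.card T.V := by
  set a := T.parent^[T.depth (T.parent T.root) - h] (T.parent T.root)
  calc _ ≤ ∑ v ∈ (T.level h).erase a, #{u | T.parent^[T.depth u - h] u = v} := by
        refine sum_le_sum fun v hv => ?_
        obtain ⟨hva, hv⟩ := mem_erase.1 hv
        exact T.subtreeSize_le_card_fiber (by simpa [level] using hv) hva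
    _ = #{u | T.parent^[T.depth u - h] u ∈ (T.level h).erase a} :=
        sum_card_fiberwise_eq_card_filter _ _ _
    _ ≤ Fintype.card T.V := card_le_univ _

lemma numChildren_eq_card (v : T.V) : T.numChildren v = #{u | T.IsChild u v} := by
  rw [numChildren, ← Set.ncard_coe_finset]
  simp

lemma card_filter_parent_mem (S : Finset T.V) :
    #{u | u ≠ T.root ∧ T.parent u ∈ S} = ∑ v ∈ S, T.numChildren v := by
  rw [card_eq_sum_card_fiberwise (f := T.parent) fun u hu => (by simpa using hu : _ ∧ _).2]
  refine sum_congr rfl fun v hv => ?_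
  rw [numChildren_eq_card, filter_filter]
  congr 1
  ext u
  simp only [mem_filter, mem_univ, true_and]
  exact ⟨fun ⟨⟨hu, _⟩, hp⟩ => ⟨hu, hp⟩, fun ⟨hu, hp⟩ => ⟨⟨hu, hp ▸ hv⟩, hp⟩⟩

lemma card_level_succ (h : ℕ) : #(T.level (h + 1)) = ∑ v ∈ T.level h, T.numChildren v := by
  rw [← card_filter_parent_mem]
  congr 1
  ext u
  simp only [level, mem_filter, mem_univ, true_and]
  constructor
  · intro hu
    have hne : u ≠ T.root := fun hr => by
      rw [hr, T.depth_root] at hu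
      omega
    have := T.depth_parent u hne
    exact ⟨hne, by omega⟩
  · rintro ⟨hne, hp⟩
    rw [T.depth_parent u hne, hp]

lemma card_verticesUpTo_succ (h : ℕ) :
    #(T.verticesUpTo (h + 1)) = ∑ v ∈ T.verticesUpTo h, T.numChildren v + 1 := by
  rw [← card_filter_parent_mem, ← card_insert_of_notMem (a := T.root) (by simp)]
  congr 1
  ext u
  by_cases hr : u = T.root
  · simp [verticesUpTo, hr, T.depth_root]
  · simp [verticesUpTo, hr, T.depth_parent u hr]

lemma card_verticesUpTo_succ_eq_add (h : ℕ) :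
    #(T.verticesUpTo (h + 1)) = #(T.verticesUpTo h) + #(T.level (h + 1)) := by
  rw [verticesUpTo, verticesUpTo, level,
    ← card_union_of_disjoint (disjoint_filter.2 fun _ _ h₁ h₂ => by omega)]
  congr 1
  ext u
  simp only [mem_filter, mem_univ, true_and, mem_union]
  omega

lemma card_verticesUpTo_zero : #(T.verticesUpTo 0) = 1 := by
  rw [card_eq_one]
  refine ⟨T.root, ?_⟩
  ext u
  simpa [verticesUpTo] using ⟨T.root_of_depth_zero u, fun h => h ▸ T.depth_root⟩

lemma ncard_setOf_depth_le (h : ℕ) :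
    Set.ncard {u : T.V | T.depth u ≤ h} = #(T.verticesUpTo h) := by
  rw [verticesUpTo, ← Set.ncard_coe_finset]
  simp

lemma two_le_numChildren {v : T.V} (hone : T.numChildren v ≠ 1) (hsub : 1 < T.subtreeSize v)
    (he : v ≠ T.parent T.root) : 2 ≤ T.numChildren v := by
  have hleaf : T.numChildren v ≠ 0 := fun h0 => by
    rw [numChildren_eq_card, card_eq_zero, filter_eq_empty_iff] at h0
    rw [T.subtreeSize_eq_one_of_isLeaf (fun u => h0 (mem_univ u)) he] at hsub
    exact lt_irrefl _ hsub
  omega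

lemma two_mul_card_verticesUpTo_le {h : ℕ}
    (hbranch : ∀ v, T.depth v ≤ h → v ≠ T.parent T.root → 2 ≤ T.numChildren v) :
    2 * #(T.verticesUpTo h) ≤ #(T.verticesUpTo (h + 1)) + 1 := by
  rw [T.card_verticesUpTo_succ h]
  set S := T.verticesUpTo h
  have hsum : 2 * #(S.erase (T.parent T.root)) ≤ ∑ v ∈ S, T.numChildren v :=
    calc 2 * #(S.erase (T.parent T.root)) = ∑ v ∈ S.erase (T.parent T.root), 2 := by
          rw [sum_const, smul_eq_mul, mul_comm]
      _ ≤ ∑ v ∈ S.erase (T.parent T.root), T.numChildren v := sum_le_sum fun v hv =>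
          hbranch v (by simpa [S, verticesUpTo] using (mem_erase.1 hv).2) (mem_erase.1 hv).1
      _ ≤ ∑ v ∈ S, T.numChildren v := sum_le_sum_of_subset (erase_subset _ _)
  have := pred_card_le_card_erase (s := S) (a := T.parent T.root)
  omega

lemma card_level_succ_le {d : ℕ} (hdeg : ∀ v, T.numChildren v ≤ d) (h : ℕ) :
    #(T.level (h + 1)) ≤ d * #(T.level h) := by
  rw [card_level_succ, mul_comm, ← smul_eq_mul, ← sum_const]
  exact sum_le_sum fun v _ => hdeg v

lemma card_verticesUpTo_succ_le {d h : ℕ} (hdeg : ∀ v, T.numChildren v ≤ d)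
    (hbranch : ∀ v, T.depth v ≤ h → v ≠ T.parent T.root → 2 ≤ T.numChildren v) :
    #(T.verticesUpTo (h + 1)) ≤ 2 * d * #(T.level h) + 1 := by
  have h₁ := T.two_mul_card_verticesUpTo_le hbranch
  have h₂ := T.card_verticesUpTo_succ_eq_add h
  have h₃ := T.card_level_succ_le hdeg h
  nlinarith

lemma card_level_mul_le {B : ℝ} (hB : 0 ≤ B) {h : ℕ}
    (hbig : ∀ v, T.depth v = h → B < T.subtreeSize v) :
    #(T.level h) * B ≤ Fintype.card T.V + B := by
  have hcard := pred_card_le_card_erase (s := T.level h)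
    (a := T.parent^[T.depth (T.parent T.root) - h] (T.parent T.root))
  set X := (T.level h).erase (T.parent^[T.depth (T.parent T.root) - h] (T.parent T.root))
  have hX : #X * B ≤ Fintype.card T.V :=
    calc #X * B = ∑ _v ∈ X, B := by rw [sum_const, nsmul_eq_mul]
      _ ≤ ∑ v ∈ X, (T.subtreeSize v : ℝ) := sum_le_sum fun v hv =>
          (hbig v (by simpa [level] using (mem_erase.1 hv).2)).le
      _ ≤ Fintype.card T.V := by exact_mod_cast T.sum_subtreeSize_level_erase_le h
  have hcard' : (#(T.level h) : ℝ) ≤ #X + 1 := by exact_mod_cast (by omega : #(T.level h) ≤ #X + 1)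
  nlinarith

lemma mul_card_verticesUpTo_succ_le {d h : ℕ} {B : ℝ} (hB : 1 ≤ B)
    (hdeg : ∀ v, T.numChildren v ≤ d) (hone : ∀ v, T.numChildren v ≠ 1)
    (hbig : ∀ v, T.depth v ≤ h → B < T.subtreeSize v) :
    B * #(T.verticesUpTo (h + 1)) ≤ 2 * d * (Fintype.card T.V + B) + B := by
  have hbranch : ∀ v, T.depth v ≤ h → v ≠ T.parent T.root → 2 ≤ T.numChildren v :=
    fun v hv he => T.two_le_numChildren (hone v) (by exact_mod_cast hB.trans_lt (hbig v hv)) he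
  have hcum : (#(T.verticesUpTo (h + 1)) : ℝ) ≤ 2 * d * #(T.level h) + 1 := by
    exact_mod_cast T.card_verticesUpTo_succ_le hdeg hbranch
  have hlevel := T.card_level_mul_le (by linarith) fun v hv => hbig v hv.le
  calc B * #(T.verticesUpTo (h + 1)) ≤ B * (2 * d * #(T.level h) + 1) := by gcongr
    _ = 2 * d * (#(T.level h) * B) + B := by ring
    _ ≤ 2 * d * (Fintype.card T.V + B) + B := by gcongr

end FiniteRootedTree

lemma TruncIso.symm {T₁ T₂ : FiniteRootedTree} {h : ℕ} (hiso : TruncIso T₁ T₂ h) :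
    TruncIso T₂ T₁ h := by
  obtain ⟨φ, hroot, hchild⟩ := hiso
  refine ⟨φ.symm, ?_, fun u u' => ?_⟩
  · have hφ : φ ⟨T₁.root, by simp [T₁.depth_root]⟩ = ⟨T₂.root, by simp [T₂.depth_root]⟩ :=
      Subtype.ext hroot
    rw [← hφ, Equiv.symm_apply_apply]
  · simpa using (hchild (φ.symm u) (φ.symm u')).symm

lemma truncIso_comm (T₁ T₂ : FiniteRootedTree) {h : ℕ} : TruncIso T₁ T₂ h ↔ TruncIso T₂ T₁ h :=
  ⟨TruncIso.symm, TruncIso.symm⟩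

lemma TruncIso.card_verticesUpTo_eq {T₁ T₂ : FiniteRootedTree} {h : ℕ} (hiso : TruncIso T₁ T₂ h) :
    #(T₁.verticesUpTo h) = #(T₂.verticesUpTo h) := by
  obtain ⟨φ, -, -⟩ := hiso
  simpa [FiniteRootedTree.verticesUpTo, Fintype.card_subtype] using Fintype.card_congr φ

lemma exists_first_level_card_verticesUpTo_gt (Ta Tb : FiniteRootedTree) {B : ℝ} (hB : 1 ≤ B)
    (hBa : B < Fintype.card Ta.V) :
    ∃ H, (#(Ta.verticesUpTo H) : ℝ) ≤ B ∧ (#(Tb.verticesUpTo H) : ℝ) ≤ B ∧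
      (B < #(Ta.verticesUpTo (H + 1)) ∨ B < #(Tb.verticesUpTo (H + 1))) := by
  have hex : ∃ h, B < #(Ta.verticesUpTo h) ∨ B < #(Tb.verticesUpTo h) := by
    refine ⟨univ.sup Ta.depth, Or.inl ?_⟩
    rwa [FiniteRootedTree.verticesUpTo, filter_true_of_mem fun u _ => le_sup (mem_univ u),
      card_univ]
  obtain ⟨H, hH⟩ : ∃ H, Nat.find hex = H + 1 := Nat.exists_eq_succ_of_ne_zero fun h0 => by
    have := Nat.find_spec hex
    rw [h0, Ta.card_verticesUpTo_zero, Tb.card_verticesUpTo_zero, Nat.cast_one, or_self] at this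
    linarith
  obtain ⟨hHa, hHb⟩ := not_or.1 (Nat.find_min hex (by omega : H < Nat.find hex))
  push Not at hHa hHb
  exact ⟨H, hHa, hHb, hH ▸ Nat.find_spec hex⟩

def IsBalancedSplit (T T' : FiniteRootedTree) (B : ℝ) (h : ℕ) (v : T.V) : Prop :=
  T.depth v = h ∧ (Set.ncard {u : T'.V | T'.depth u ≤ h} : ℝ) ≤ B ∧
    (¬ TruncIso T T' h ∨ (T.subtreeSize v : ℝ) ≤ B)

theorem exists_isBalancedSplit (Ta Tb : FiniteRootedTree) {d : ℕ} {B : ℝ}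
    (hdeg : ∀ v, Ta.numChildren v ≤ d) (hone : ∀ v, Ta.numChildren v ≠ 1) (hB : 1 ≤ B)
    (hBn : 2 * d * (Fintype.card Ta.V + B) + B ≤ B ^ 2) :
    ∃ h, (∃ v, IsBalancedSplit Ta Tb B h v) ∨ ∃ v, IsBalancedSplit Tb Ta B h v := by
  by_cases hsmall : (Fintype.card Ta.V : ℝ) ≤ B
  · refine ⟨0, Or.inl ⟨Ta.root, Ta.depth_root, ?_, Or.inr ?_⟩⟩
    · rwa [Tb.ncard_setOf_depth_le, Tb.card_verticesUpTo_zero, Nat.cast_one]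
    · exact le_trans (by exact_mod_cast Ta.subtreeSize_le_card _) hsmall
  push Not at hsmall
  obtain ⟨H, -, hHb, hsplit⟩ := exists_first_level_card_verticesUpTo_gt Ta Tb hB hsmall
  by_cases hshallow : ∃ v, Ta.depth v ≤ H ∧ (Ta.subtreeSize v : ℝ) ≤ B
  · obtain ⟨v, hvH, hv⟩ := hshallow
    refine ⟨_, Or.inl ⟨v, rfl, ?_, Or.inr hv⟩⟩
    rw [Tb.ncard_setOf_depth_le]
    refine le_trans ?_ hHb
    exact_mod_cast card_le_card fun u hu => by
      simp only [FiniteRootedTree.verticesUpTo, mem_filter, mem_univ, true_and] at hu ⊢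
      omega
  push Not at hshallow
  have hA : (#(Ta.verticesUpTo (H + 1)) : ℝ) ≤ B := by
    have := Ta.mul_card_verticesUpTo_succ_le hB hdeg hone hshallow
    nlinarith
  have hBig := hsplit.resolve_left (not_lt.2 hA)
  obtain ⟨v, hv⟩ : (Tb.level (H + 1)).Nonempty := by
    rw [← card_pos, Nat.pos_iff_ne_zero]
    intro h0
    rw [Tb.card_verticesUpTo_succ_eq_add, h0, add_zero] at hBig
    linarith
  refine ⟨H + 1, Or.inr ⟨v, by simpa [FiniteRootedTree.level] using hv, ?_, Or.inl fun hiso => ?_⟩⟩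
  · rwa [Ta.ncard_setOf_depth_le]
  · have := hiso.card_verticesUpTo_eq
    rw [this] at hBig
    linarith

lemma threshold_spec (d n : ℕ) (hn : 1 ≤ n) :
    1 ≤ 4 * ((d : ℝ) + 1) * √n ∧
      2 * d * (n + 4 * ((d : ℝ) + 1) * √n) + 4 * ((d : ℝ) + 1) * √n ≤
        (4 * ((d : ℝ) + 1) * √n) ^ 2 := by
  have hs : 1 ≤ √(n : ℝ) := Real.one_le_sqrt.2 (by exact_mod_cast hn)
  have hsq : √(n : ℝ) ^ 2 = n := Real.sq_sqrt (Nat.cast_nonneg n)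
  have hd : (0 : ℝ) ≤ d := Nat.cast_nonneg d
  generalize √(n : ℝ) = s at *
  refine ⟨by nlinarith, ?_⟩
  rw [← hsq]
  have hss : s ≤ s ^ 2 := by nlinarith
  nlinarith [mul_le_mul_of_nonneg_left hss (by positivity : (0 : ℝ) ≤ (d + 1) * (2 * d + 1)),
    mul_nonneg (mul_nonneg hd hd) (sq_nonneg s), mul_nonneg hd (sq_nonneg s)]

theorem stmt_1_general (d : ℕ) (T₁ T₂ : FiniteRootedTree)
    (hdeg₁ : ∀ v : T₁.V, T₁.numChildren v ≤ d)
    (hdeg₂ : ∀ v : T₂.V, T₂.numChildren v ≤ d)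
    (hone₁ : ∀ v : T₁.V, T₁.numChildren v ≠ 1)
    (hone₂ : ∀ v : T₂.V, T₂.numChildren v ≠ 1) :
    ∃ h : ℕ,
      (∃ v : T₁.V, T₁.depth v = h ∧
        (Set.ncard {u : T₂.V | T₂.depth u ≤ h} : ℝ) ≤
          4 * ((d : ℝ) + 1) * Real.sqrt (min (Fintype.card T₁.V) (Fintype.card T₂.V)) ∧
        (¬ TruncIso T₁ T₂ h ∨
          (T₁.subtreeSize v : ℝ) ≤
            4 * ((d : ℝ) + 1) * Real.sqrt (min (Fintype.card T₁.V) (Fintype.card T₂.V)))) ∨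
      (∃ v : T₂.V, T₂.depth v = h ∧
        (Set.ncard {u : T₁.V | T₁.depth u ≤ h} : ℝ) ≤
          4 * ((d : ℝ) + 1) * Real.sqrt (min (Fintype.card T₁.V) (Fintype.card T₂.V)) ∧
        (¬ TruncIso T₁ T₂ h ∨
          (T₂.subtreeSize v : ℝ) ≤
            4 * ((d : ℝ) + 1) * Real.sqrt (min (Fintype.card T₁.V) (Fintype.card T₂.V)))) := by
  rcases le_total (Fintype.card T₁.V) (Fintype.card T₂.V) with hle | hle
  · rw [min_eq_left (by exact_mod_cast hle)]
    obtain ⟨hB, hBn⟩ := threshold_spec d _ (Fintype.card_pos_iff.2 ⟨T₁.root⟩)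
    simpa only [IsBalancedSplit, truncIso_comm T₂ T₁] using
      exists_isBalancedSplit T₁ T₂ hdeg₁ hone₁ hB hBn
  · rw [min_eq_right (by exact_mod_cast hle)]
    obtain ⟨hB, hBn⟩ := threshold_spec d _ (Fintype.card_pos_iff.2 ⟨T₂.root⟩)
    obtain ⟨h, hsplit⟩ := exists_isBalancedSplit T₂ T₁ hdeg₂ hone₂ hB hBn
    exact ⟨h, by simpa only [IsBalancedSplit, truncIso_comm T₂ T₁] using hsplit.symm⟩

/-- existence of a balanced split. -/
theorem stmt_1 (d : ℕ) (hd : 2 ≤ d) (T₁ T₂ : FiniteRootedTree)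
    (hdeg₁ : ∀ v : T₁.V, T₁.numChildren v ≤ d)
    (hdeg₂ : ∀ v : T₂.V, T₂.numChildren v ≤ d)
    (hone₁ : ∀ v : T₁.V, T₁.numChildren v ≠ 1)
    (hone₂ : ∀ v : T₂.V, T₂.numChildren v ≠ 1) :
    ∃ h : ℕ,
      (∃ v : T₁.V, T₁.depth v = h ∧
        (Set.ncard {u : T₂.V | T₂.depth u ≤ h} : ℝ) ≤
          4 * ((d : ℝ) + 1) * Real.sqrt (min (Fintype.card T₁.V) (Fintype.card T₂.V)) ∧
        (¬ TruncIso T₁ T₂ h ∨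
          (T₁.subtreeSize v : ℝ) ≤
            4 * ((d : ℝ) + 1) * Real.sqrt (min (Fintype.card T₁.V) (Fintype.card T₂.V)))) ∨
      (∃ v : T₂.V, T₂.depth v = h ∧
        (Set.ncard {u : T₁.V | T₁.depth u ≤ h} : ℝ) ≤
          4 * ((d : ℝ) + 1) * Real.sqrt (min (Fintype.card T₁.V) (Fintype.card T₂.V)) ∧
        (¬ TruncIso T₁ T₂ h ∨
          (T₂.subtreeSize v : ℝ) ≤
            4 * ((d : ℝ) + 1) * Real.sqrt (min (Fintype.card T₁.V) (Fintype.card T₂.V)))) :=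
  stmt_1_general d T₁ T₂ hdeg₁ hdeg₂ hone₁ hone₂
end

section
/- Let T be a finite rooted tree with n vertices and let h be a natural number such that every vertex of T of depth less than h has at least two children (in particular, T has no leaf of depth less than h). Suppose the number s of vertices of T of depth at most h satisfies s > 4·√n. Then 4·|{v : v has depth h and the subtree of T rooted at v has more than 2·√n vertices}| ≤ |{v : v has depth h}|; that is, at least three quarters of the vertices at depth h root subtrees with at most 2·√n vertices. -/
attribute [local instance] Classical.propDecidable

/-
Since every vertex above level `h` has at least two children, each level is at least twice as
large as the previous one, so the `s` vertices of depth `≤ h` number at most `2D`, where `D` is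
the size of level `h`. The subtrees of the level-`h` vertices are disjoint and lie among the
`n - s + D` vertices of depth `≥ h`, so fewer than `(n - s + D) / (2√n)` of them have more than
`2√n` vertices; together with `s ≤ 2D` and `s > 4√n` this is at most `D / 4 - 1`.

The parent of the root is unconstrained in this encoding, so `subtreeSize` may follow a parent
chain through the root. This can only inflate the subtree of the single level-`h` vertex on the
orbit of the root under `parent`, which the slack of `1` absorbs.
-/

open Finset

lemma Set.ncard_setOf_eq_card_filter {α : Type*} [Fintype α] (p : α → Prop) [DecidablePred p] :
    Set.ncard {x | p x} = #{x | p x} := by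
  rw [Set.ncard_eq_toFinset_card', Set.toFinset_ofPred]

namespace FiniteRootedTree

variable (T : FiniteRootedTree)

def InRootOrbit (v : T.V) : Prop :=
  ∃ j, T.parent^[j] T.root = v

def ancestorAt (d : ℕ) (u : T.V) : T.V :=
  T.parent^[T.depth u - d] u

variable {T}

lemma depth_eq_depth_iterate_add {k : ℕ} {u : T.V} (hk : ∀ j < k, T.parent^[j] u ≠ T.root) :
    T.depth u = T.depth (T.parent^[k] u) + k := by
  induction k generalizing u with
  | zero => rfl
  | succ k ih =>
    have hu : u ≠ T.root := hk 0 k.succ_pos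
    rw [Function.iterate_succ_apply, T.depth_parent u hu,
      ih fun j hj => by simpa only [← Function.iterate_succ_apply] using hk (j + 1) (by omega)]
    omega

lemma InRootOrbit.eq_root_or_eq_iterate {v : T.V} (hv : T.InRootOrbit v) :
    v = T.root ∨ v = T.parent^[T.depth (T.parent T.root) + 1 - T.depth v] T.root := by
  have hmin := Nat.find_spec hv
  rcases hfind : Nat.find hv with _ | a
  · rw [hfind] at hmin
    exact Or.inl hmin.symm
  right
  rw [hfind, Function.iterate_succ_apply] at hmin
  have hk : ∀ j < a, T.parent^[j] (T.parent T.root) ≠ T.root := by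
    intro j hj hroot
    have hshift := congrArg T.parent^[a - j] hroot
    rw [← Function.iterate_add_apply, Nat.sub_add_cancel hj.le, hmin] at hshift
    have := Nat.find_min' hv hshift.symm
    omega
  rw [depth_eq_depth_iterate_add hk, hmin, show T.depth v + a + 1 - T.depth v = a + 1 by omega,
    Function.iterate_succ_apply, hmin]

lemma setOf_inRootOrbit_depth_subsingleton (h : ℕ) :
    {v | T.InRootOrbit v ∧ T.depth v = h}.Subsingleton := by
  rintro v ⟨hv, rfl⟩ w ⟨hw, hwv⟩
  rcases hv.eq_root_or_eq_iterate with rfl | hv'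
  · rw [T.depth_root] at hwv
    exact (T.root_of_depth_zero w hwv).symm
  rcases hw.eq_root_or_eq_iterate with rfl | hw'
  · rw [T.depth_root] at hwv
    exact T.root_of_depth_zero v hwv.symm
  rw [hv', hw', hwv]

lemma subtreeSize_le_card_ancestorAt {v : T.V} (hv : ¬ T.InRootOrbit v) :
    T.subtreeSize v ≤ #{u | T.depth v ≤ T.depth u ∧ T.ancestorAt (T.depth v) u = v} := by
  rw [subtreeSize, Set.ncard_setOf_eq_card_filter]
  refine card_le_card fun u hu => ?_
  obtain ⟨k, rfl⟩ := (mem_filter.1 hu).2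
  have hk : ∀ j < k, T.parent^[j] u ≠ T.root := by
    rintro j hj hroot
    refine hv ⟨k - j, ?_⟩
    rw [← hroot, ← Function.iterate_add_apply, Nat.sub_add_cancel hj.le]
  have hdepth := depth_eq_depth_iterate_add hk
  simp only [mem_filter, mem_univ, true_and]
  refine ⟨by omega, ?_⟩
  rw [ancestorAt, hdepth, Nat.add_sub_cancel_left]

lemma sum_subtreeSize_le_card_depth_ge (h : ℕ) (A : Finset T.V)
    (hA : ∀ v ∈ A, T.depth v = h ∧ ¬ T.InRootOrbit v) :
    ∑ v ∈ A, T.subtreeSize v ≤ #{u | h ≤ T.depth u} :=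
  calc ∑ v ∈ A, T.subtreeSize v
      ≤ ∑ v ∈ A, #{u ∈ {u | h ≤ T.depth u} | T.ancestorAt h u = v} := sum_le_sum fun v hv => by
        obtain ⟨rfl, hv⟩ := hA v hv
        simpa only [filter_filter] using subtreeSize_le_card_ancestorAt hv
    _ = #{u ∈ {u | h ≤ T.depth u} | T.ancestorAt h u ∈ A} :=
        sum_card_fiberwise_eq_card_filter _ _ _
    _ ≤ #{u | h ≤ T.depth u} := card_filter_le _ _

lemma card_depth_eq_le_card_not_inRootOrbit_add_one (h : ℕ) (p : T.V → Prop) :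
    #{v | T.depth v = h ∧ p v} ≤ #{v | T.depth v = h ∧ p v ∧ ¬ T.InRootOrbit v} + 1 := by
  have horbit : #{v | (T.depth v = h ∧ p v) ∧ T.InRootOrbit v} ≤ 1 :=
    card_le_one.2 fun a ha b hb => by
      simp only [mem_filter, mem_univ, true_and] at ha hb
      exact setOf_inRootOrbit_depth_subsingleton h ⟨ha.2, ha.1.1⟩ ⟨hb.2, hb.1.1⟩
  have hsplit := card_filter_add_card_filter_not (s := {v | T.depth v = h ∧ p v}) T.InRootOrbit
  simp only [filter_filter, and_assoc] at hsplit horbit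
  omega

lemma card_mul_le_card_depth_ge (h : ℕ) (c : ℝ) :
    #{v | T.depth v = h ∧ c < T.subtreeSize v ∧ ¬ T.InRootOrbit v} * c ≤
      (#{u | h ≤ T.depth u} : ℝ) :=
  calc #{v | T.depth v = h ∧ c < T.subtreeSize v ∧ ¬ T.InRootOrbit v} * c
      ≤ ∑ v ∈ {v | T.depth v = h ∧ c < T.subtreeSize v ∧ ¬ T.InRootOrbit v},
          (T.subtreeSize v : ℝ) := by
        rw [← nsmul_eq_mul]
        exact card_nsmul_le_sum _ _ _ fun v hv => (mem_filter.1 hv).2.2.1.le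
    _ ≤ #{u | h ≤ T.depth u} := by
        refine mod_cast sum_subtreeSize_le_card_depth_ge h _ fun v hv => ?_
        obtain ⟨hdepth, -, hv⟩ := (mem_filter.1 hv).2
        exact ⟨hdepth, hv⟩

lemma two_mul_card_depth_eq_le (k : ℕ) (hk : ∀ v, T.depth v = k → 2 ≤ T.numChildren v) :
    2 * #{v | T.depth v = k} ≤ #{v | T.depth v = k + 1} :=
  calc 2 * #{v | T.depth v = k}
      = ∑ v ∈ {v | T.depth v = k}, 2 := by rw [sum_const, smul_eq_mul, mul_comm]
    _ ≤ ∑ v ∈ {v | T.depth v = k}, #{u ∈ {u | u ≠ T.root} | T.parent u = v} :=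
        sum_le_sum fun v hv => by
          simpa only [numChildren, IsChild, Set.ncard_setOf_eq_card_filter, filter_filter]
            using hk v (mem_filter.1 hv).2
    _ = #{u ∈ {u | u ≠ T.root} | T.parent u ∈ ({v | T.depth v = k} : Finset T.V)} :=
        sum_card_fiberwise_eq_card_filter _ _ _
    _ ≤ #{v | T.depth v = k + 1} := card_le_card fun u hu => by
        simp only [mem_filter, mem_univ, true_and] at hu ⊢
        rw [T.depth_parent u hu.1, hu.2]

lemma card_depth_le_le_two_mul_card_depth_eq (h : ℕ)
    (hbranch : ∀ v, T.depth v < h → 2 ≤ T.numChildren v) :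
    #{v | T.depth v ≤ h} ≤ 2 * #{v | T.depth v = h} := by
  induction h with
  | zero => simp only [Nat.le_zero]; omega
  | succ h ih =>
    have hsplit : #{v | T.depth v ≤ h + 1} = #{v | T.depth v ≤ h} + #{v | T.depth v = h + 1} := by
      rw [← card_union_of_disjoint (disjoint_filter.2 fun v _ h1 h2 => by omega), ← filter_or]
      exact congrArg card (filter_congr fun v _ => by omega)
    have := ih fun v hv => hbranch v (by omega)
    have := two_mul_card_depth_eq_le h fun v hv => hbranch v (by omega)
    omega

lemma card_depth_ge_add_card_depth_le (h : ℕ) :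
    #{v | h ≤ T.depth v} + #{v | T.depth v ≤ h} = Fintype.card T.V + #{v | T.depth v = h} := by
  rw [← card_union_add_card_inter, ← filter_or, ← filter_and,
    filter_true_of_mem fun v _ => le_total _ _, card_univ]
  exact congrArg _ (congrArg card (filter_congr fun v _ => by omega))

end FiniteRootedTree

open FiniteRootedTree

/-- if every vertex of depth `< h` has at least two children and the
number of vertices of depth at most `h` exceeds `4√n`, then at least three quarters
of the vertices at depth `h` root subtrees with at most `2√n` vertices. -/
theorem stmt_2 (T : FiniteRootedTree) (h : ℕ)
    (hbranch : ∀ v : T.V, T.depth v < h → 2 ≤ T.numChildren v)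
    (hs : (4 : ℝ) * Real.sqrt (Fintype.card T.V) <
      (Set.ncard {v : T.V | T.depth v ≤ h} : ℝ)) :
    4 * Set.ncard {v : T.V | T.depth v = h ∧
        (2 : ℝ) * Real.sqrt (Fintype.card T.V) < (T.subtreeSize v : ℝ)} ≤
      Set.ncard {v : T.V | T.depth v = h} := by
  set n := Fintype.card T.V
  set m := Real.sqrt n
  simp only [Set.ncard_setOf_eq_card_filter] at hs ⊢
  have hbig : (#{v | T.depth v = h ∧ 2 * m < T.subtreeSize v} : ℝ) ≤
      #{v | T.depth v = h ∧ 2 * m < T.subtreeSize v ∧ ¬ T.InRootOrbit v} + 1 := by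
    exact_mod_cast card_depth_eq_le_card_not_inRootOrbit_add_one h _
  have hgenuine := card_mul_le_card_depth_ge (T := T) h (2 * m)
  have hlevels : (#{v | T.depth v ≤ h} : ℝ) ≤ 2 * #{v | T.depth v = h} := by
    exact_mod_cast card_depth_le_le_two_mul_card_depth_eq h hbranch
  have hcount : (#{v | h ≤ T.depth v} + #{v | T.depth v ≤ h} : ℝ) = n + #{v | T.depth v = h} := by
    exact_mod_cast card_depth_ge_add_card_depth_le h
  have hsn : (#{v | T.depth v ≤ h} : ℝ) ≤ n := by exact_mod_cast card_le_univ _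
  have hmm : m * m = n := Real.mul_self_sqrt n.cast_nonneg
  have hm : 0 < m := Real.sqrt_pos.2 (Nat.cast_pos.2 (Fintype.card_pos_iff.2 ⟨T.root⟩))
  have hm4 : 4 < m := by nlinarith
  -- `(2D - s)(m - 2) ≥ 0` and `(s - 4m)(m + 2) ≥ 0` add up to the claim.
  have key : (4 * #{v | T.depth v = h ∧ 2 * m < T.subtreeSize v} : ℝ) * m ≤
      #{v | T.depth v = h} * m := by
    nlinarith [mul_nonneg (sub_nonneg.2 hlevels) (by linarith : (0 : ℝ) ≤ m - 2),
      mul_nonneg (sub_nonneg.2 hs.le) (by linarith : (0 : ℝ) ≤ m + 2)]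
  exact_mod_cast le_of_mul_le_mul_right key hm
end

section
/- Let h be a natural number and let U₁ and U₂ be finite rooted trees with a and b leaves respectively. Then 2^h · |{(α₁, α₂) ∈ Inj(U₁, M_h) × Inj(U₂, M_h) : there exists a Boolean list ℓ of length h with ℓ ∈ α₁(V(U₁)) ∩ α₂(V(U₂))}| ≤ a · b · |Inj(U₁, M_h)| · |Inj(U₂, M_h)|. Equivalently, for α₁ and α₂ chosen independently and uniformly at random (when both sets are nonempty), the probability that the images α₁(V(U₁)) and α₂(V(U₂)) share a leaf of M_h is at most a·b/2^h. -/
attribute [local instance] Classical.propDecidable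

/-! The binary tree is leaf-transitive: the xor mask `c` acts on it by tree automorphisms, and a
suitable mask sends any leaf to any other, so the number `N` of embeddings of `U` whose image
contains a given leaf does not depend on the leaf. Each embedding reaches at most `a` leaves,
so double counting gives `2^h N ≤ a |Inj(U, M_h)|`. A pair sharing a leaf is counted among the
`2^h N₁ N₂` triples (leaf, α₁ through it, α₂ through it), and multiplying by `2^h` finishes. -/

def maskFlip (c m : List Bool) : List Bool :=
  m.mapIdx fun i b => xor b (c.getD i false)

@[simp]
lemma length_maskFlip (c m : List Bool) : (maskFlip c m).length = m.length :=
  List.length_mapIdx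

lemma maskFlip_append_singleton (c m : List Bool) (b : Bool) :
    maskFlip c (m ++ [b]) = maskFlip c m ++ [xor b (c.getD m.length false)] :=
  List.mapIdx_append_one

lemma maskFlip_involutive (c : List Bool) : Function.Involutive (maskFlip c) := by
  intro m
  simp only [maskFlip, List.mapIdx_mapIdx]
  exact List.ext_getElem List.length_mapIdx fun i _ _ => by simp

lemma exists_maskFlip_eq {l l' : List Bool} (hl : l.length = l'.length) :
    ∃ c, maskFlip c l = l' :=
  ⟨maskFlip l' l, List.ext_getElem (by simp [hl]) fun i h₁ h₂ => by
    simp only [length_maskFlip] at h₁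
    simp [maskFlip, List.getElem?_eq_getElem h₁, List.getElem?_eq_getElem h₂]⟩

lemma finite_InjM (h : ℕ) (U : FiniteRootedTree) : (InjM h U).Finite :=
  (Set.Finite.pi' fun _ => List.finite_length_le Bool h).subset fun _ hα u => hα.2.1 u

lemma isLeaf_of_mem_InjM {h : ℕ} {U : FiniteRootedTree} {α : U.V → List Bool}
    (hα : α ∈ InjM h U) {u : U.V} (hu : (α u).length = h) : U.IsLeaf u := by
  intro u' hu'
  obtain ⟨b, hb⟩ := hα.2.2.2 u u' hu'
  have := hα.2.1 u'
  simp [hb, hu] at this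

lemma comp_mem_InjM {h : ℕ} {U : FiniteRootedTree} {f : List Bool → List Bool}
    (hf : f.Injective) (hlen : ∀ m, (f m).length = m.length)
    (hchild : ∀ m b, ∃ b', f (m ++ [b]) = f m ++ [b']) {α : U.V → List Bool}
    (hα : α ∈ InjM h U) : f ∘ α ∈ InjM h U := by
  obtain ⟨hinj, hle, hroot, hext⟩ := hα
  refine ⟨hf.comp hinj, fun u => (hlen _).trans_le (hle u), ?_, fun u u' hu' => ?_⟩
  · simpa [hroot] using hlen []
  · obtain ⟨b, hb⟩ := hext u u' hu'
    simpa [hb] using hchild (α u) b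

lemma maskFlip_comp_mem_InjM {h : ℕ} {U : FiniteRootedTree} (c : List Bool)
    {α : U.V → List Bool} (hα : α ∈ InjM h U) : maskFlip c ∘ α ∈ InjM h U :=
  comp_mem_InjM (maskFlip_involutive c).injective (length_maskFlip c)
    (fun m b => ⟨_, maskFlip_append_singleton c m b⟩) hα

def InjMThrough (h : ℕ) (U : FiniteRootedTree) (l : List Bool) : Set (U.V → List Bool) :=
  {α ∈ InjM h U | l ∈ Set.range α}

lemma finite_InjMThrough (h : ℕ) (U : FiniteRootedTree) (l : List Bool) :
    (InjMThrough h U l).Finite :=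
  (finite_InjM h U).subset fun _ hα => hα.1

lemma ncard_InjMThrough_le_of_length_eq {h : ℕ} {U : FiniteRootedTree} {l l' : List Bool}
    (hl : l.length = l'.length) : (InjMThrough h U l).ncard ≤ (InjMThrough h U l').ncard := by
  obtain ⟨c, hc⟩ := exists_maskFlip_eq hl
  refine Set.ncard_le_ncard_of_injOn (maskFlip c ∘ ·) ?_
    ((maskFlip_involutive c).injective.comp_left.injOn) (finite_InjMThrough h U l')
  rintro α ⟨hα, u, rfl⟩
  exact ⟨maskFlip_comp_mem_InjM c hα, u, hc⟩

lemma ncard_InjMThrough_eq_of_length_eq {h : ℕ} {U : FiniteRootedTree} {l l' : List Bool}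
    (hl : l.length = l'.length) : (InjMThrough h U l).ncard = (InjMThrough h U l').ncard :=
  (ncard_InjMThrough_le_of_length_eq hl).antisymm (ncard_InjMThrough_le_of_length_eq hl.symm)

noncomputable def leavesM (h : ℕ) : Finset (List Bool) :=
  (List.finite_length_eq Bool h).toFinset

@[simp]
lemma mem_leavesM {h : ℕ} {l : List Bool} : l ∈ leavesM h ↔ l.length = h := by
  simp [leavesM]

lemma card_leavesM (h : ℕ) : (leavesM h).card = 2 ^ h := by
  rw [leavesM, ← Set.ncard_eq_toFinset_card _ (List.finite_length_eq Bool h),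
    ← Nat.card_coe_set_eq]
  exact (Nat.card_eq_fintype_card (α := List.Vector Bool h)).trans (by simp [card_vector])

lemma card_leavesM_filter_mem_range_le {h : ℕ} {U : FiniteRootedTree} {α : U.V → List Bool}
    (hα : α ∈ InjM h U) : ((leavesM h).filter (· ∈ Set.range α)).card ≤ U.leaves.card := by
  refine (Finset.card_le_card fun l hl => ?_).trans (Finset.card_image_le (f := α))
  obtain ⟨hlh, u, rfl⟩ := Finset.mem_filter.mp hl
  have hleaf := isLeaf_of_mem_InjM hα (mem_leavesM.mp hlh)
  exact Finset.mem_image_of_mem α (by simpa [FiniteRootedTree.leaves] using hleaf)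

lemma two_pow_mul_ncard_InjMThrough_le (U : FiniteRootedTree) {h : ℕ} {l : List Bool}
    (hl : l.length = h) : 2 ^ h * (InjMThrough h U l).ncard ≤ U.leaves.card * (InjM h U).ncard := by
  have hcount := Finset.card_mul_le_card_mul (fun l' α => l' ∈ Set.range α)
    (s := leavesM h) (t := (finite_InjM h U).toFinset) (m := (InjMThrough h U l).ncard)
    (n := U.leaves.card) (fun l' hl' => ?_) (fun α hα => ?_)
  · rwa [card_leavesM, ← Set.ncard_eq_toFinset_card _ (finite_InjM h U),
      mul_comm (Set.ncard _)] at hcount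
  · rw [ncard_InjMThrough_eq_of_length_eq (hl.trans (mem_leavesM.mp hl').symm),
      ← Set.ncard_coe_finset, Finset.coe_bipartiteAbove]
    simp [InjMThrough]
  · exact card_leavesM_filter_mem_range_le ((finite_InjM h U).mem_toFinset.mp hα)

lemma ncard_shareLeaf_le {h : ℕ} (U₁ U₂ : FiniteRootedTree) {l : List Bool}
    (hl : l.length = h) :
    Set.ncard {p : (U₁.V → List Bool) × (U₂.V → List Bool) |
        p.1 ∈ InjM h U₁ ∧ p.2 ∈ InjM h U₂ ∧
        ∃ l : List Bool, l.length = h ∧ l ∈ Set.range p.1 ∧ l ∈ Set.range p.2} ≤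
      2 ^ h * ((InjMThrough h U₁ l).ncard * (InjMThrough h U₂ l).ncard) := by
  calc _ ≤ (⋃ l' ∈ leavesM h, InjMThrough h U₁ l' ×ˢ InjMThrough h U₂ l').ncard := by
        refine Set.ncard_le_ncard ?_ ((leavesM h).finite_toSet.biUnion fun l' _ =>
          (finite_InjMThrough h U₁ l').prod (finite_InjMThrough h U₂ l'))
        rintro p ⟨h₁, h₂, l', hl', hr₁, hr₂⟩
        exact Set.mem_biUnion (mem_leavesM.mpr hl') ⟨⟨h₁, hr₁⟩, h₂, hr₂⟩
    _ ≤ ∑ l' ∈ leavesM h, (InjMThrough h U₁ l' ×ˢ InjMThrough h U₂ l').ncard :=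
        (leavesM h).set_ncard_biUnion_le _
    _ = 2 ^ h * ((InjMThrough h U₁ l).ncard * (InjMThrough h U₂ l).ncard) := by
        rw [← card_leavesM, ← smul_eq_mul, ← Finset.sum_const]
        refine Finset.sum_congr rfl fun l' hl' => ?_
        have hll' := (mem_leavesM.mp hl').trans hl.symm
        rw [Set.ncard_prod, ncard_InjMThrough_eq_of_length_eq hll',
          ncard_InjMThrough_eq_of_length_eq hll']

/-- the probability that two independent uniform injective
homomorphisms into `M_h` share a leaf of `M_h` in their images is at most
`a·b/2^h`. -/
theorem stmt_3 (h : ℕ) (U₁ U₂ : FiniteRootedTree) :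
    2 ^ h * Set.ncard {p : (U₁.V → List Bool) × (U₂.V → List Bool) |
        p.1 ∈ InjM h U₁ ∧ p.2 ∈ InjM h U₂ ∧
        ∃ l : List Bool, l.length = h ∧ l ∈ Set.range p.1 ∧ l ∈ Set.range p.2} ≤
      U₁.leaves.card * U₂.leaves.card * (InjM h U₁).ncard * (InjM h U₂).ncard := by
  have hl : (List.replicate h false).length = h := List.length_replicate
  calc _ ≤ 2 ^ h * (2 ^ h * ((InjMThrough h U₁ _).ncard * (InjMThrough h U₂ _).ncard)) :=
        Nat.mul_le_mul_left _ (ncard_shareLeaf_le U₁ U₂ hl)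
    _ = (2 ^ h * (InjMThrough h U₁ _).ncard) * (2 ^ h * (InjMThrough h U₂ _).ncard) := by ring
    _ ≤ (U₁.leaves.card * (InjM h U₁).ncard) * (U₂.leaves.card * (InjM h U₂).ncard) :=
        Nat.mul_le_mul (two_pow_mul_ncard_InjMThrough_le U₁ hl)
          (two_pow_mul_ncard_InjMThrough_le U₂ hl)
    _ = _ := by ring
end

section
/- Let h be a natural number, let U be a finite rooted tree, and let v be a vertex of U of depth h. Then for any two Boolean lists ℓ and ℓ' of length h, |{α ∈ Inj(U, M_h) : α(v) = ℓ}| = |{α ∈ Inj(U, M_h) : α(v) = ℓ'}|; that is, for uniformly chosen α ∈ Inj(U, M_h) (when this set is nonempty), the image α(v) is uniformly distributed over the 2^h leaves of M_h. -/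
attribute [local instance] Classical.propDecidable

/-! Flipping the bits of a list selected by a mask `m` of length `h` is an automorphism of `M_h`;
composing with it is an involution of `InjM h U` which, for `m = l xor l'`, exchanges the maps
sending `v` to `l` with those sending `v` to `l'`. -/

namespace List

theorem zipWith_xor_zipWith_xor_of_length_le :
    ∀ (s m : List Bool), s.length ≤ m.length → zipWith xor (zipWith xor s m) m = s
  | [], _, _ => rfl
  | _ :: s, _ :: m, h => by
      simp [zipWith_xor_zipWith_xor_of_length_le s m (by simpa using h)]
  | _ :: _, [], h => by simp at h

theorem zipWith_xor_left_zipWith_xor :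
    ∀ (l l' : List Bool), l.length = l'.length → zipWith xor l (zipWith xor l l') = l'
  | [], [], _ => rfl
  | _ :: l, _ :: l', h => by
      simp [zipWith_xor_left_zipWith_xor l l' (by simpa using h)]
  | [], _ :: _, h => by simp at h
  | _ :: _, [], h => by simp at h

theorem exists_zipWith_xor_append_singleton :
    ∀ (s m : List Bool) (b : Bool), s.length < m.length →
      ∃ b', zipWith xor (s ++ [b]) m = zipWith xor s m ++ [b']
  | [], c :: _, b, _ => ⟨xor b c, rfl⟩
  | _ :: s, _ :: m, b, h => by
      obtain ⟨b', hb'⟩ := exists_zipWith_xor_append_singleton s m b (by simpa using h)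
      exact ⟨b', by simp [hb']⟩
  | _, [], _, h => by simp at h

end List

section XorComp

open List

variable {h : ℕ} {U : FiniteRootedTree} {m : List Bool}

def xorComp (m : List Bool) (α : U.V → List Bool) : U.V → List Bool :=
  fun u => zipWith xor (α u) m

theorem xorComp_xorComp (hm : m.length = h) {α : U.V → List Bool} (hα : α ∈ InjM h U) :
    xorComp m (xorComp m α) = α :=
  funext fun u => zipWith_xor_zipWith_xor_of_length_le _ _ (hm ▸ hα.2.1 u)

theorem xorComp_mem_InjM (hm : m.length = h) {α : U.V → List Bool} (hα : α ∈ InjM h U) :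
    xorComp m α ∈ InjM h U := by
  obtain ⟨hinj, hlen, hroot, hchild⟩ := hα
  refine ⟨?_, fun u => ?_, by simp [xorComp, hroot], fun u u' hc => ?_⟩
  · intro u u' huu
    have hinv := xorComp_xorComp hm ⟨hinj, hlen, hroot, hchild⟩
    apply hinj
    rw [← congrFun hinv u, ← congrFun hinv u']
    exact congrArg (zipWith xor · m) huu
  · simpa [xorComp] using Or.inl (hlen u)
  · obtain ⟨b, hb⟩ := hchild u u' hc
    have hlt : (α u).length < m.length := by
      have := hlen u'
      simp only [hb, length_append, length_singleton] at this
      omega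
    obtain ⟨b', hb'⟩ := exists_zipWith_xor_append_singleton (α u) m b hlt
    exact ⟨b', by simp only [xorComp, hb, hb']⟩

theorem bijOn_xorComp_fiber (hm : m.length = h) (v : U.V) {s : List Bool}
    (hs : s.length ≤ h) :
    Set.BijOn (xorComp m) {α ∈ InjM h U | α v = s}
      {α ∈ InjM h U | α v = zipWith xor s m} := by
  refine Set.InvOn.bijOn ⟨fun α hα => xorComp_xorComp hm hα.1,
    fun α hα => xorComp_xorComp hm hα.1⟩ ?_ ?_
  · rintro α ⟨hα, rfl⟩
    exact ⟨xorComp_mem_InjM hm hα, rfl⟩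
  · rintro α ⟨hα, hαv⟩
    refine ⟨xorComp_mem_InjM hm hα, ?_⟩
    simp only [xorComp, hαv]
    exact zipWith_xor_zipWith_xor_of_length_le s m (hm ▸ hs)

end XorComp

theorem stmt_6_general (h : ℕ) (U : FiniteRootedTree) (v : U.V)
    (l l' : List Bool) (hl : l.length = h) (hl' : l'.length = h) :
    Set.ncard {α ∈ InjM h U | α v = l} = Set.ncard {α ∈ InjM h U | α v = l'} := by
  have hm : (List.zipWith xor l l').length = h := by simp [hl, hl']
  rw [(bijOn_xorComp_fiber hm v hl.le).ncard_eq,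
    List.zipWith_xor_left_zipWith_xor l l' (hl.trans hl'.symm)]

/-- the image of a depth-`h` vertex under a uniform injective
homomorphism into `M_h` is uniformly distributed over the leaves of `M_h`. -/
theorem stmt_6 (h : ℕ) (U : FiniteRootedTree) (v : U.V) (hv : U.depth v = h)
    (l l' : List Bool) (hl : l.length = h) (hl' : l'.length = h) :
    Set.ncard {α ∈ InjM h U | α v = l} = Set.ncard {α ∈ InjM h U | α v = l'} :=
  stmt_6_general h U v l l' hl hl'
end

section
/- Let h be a natural number, let U be a finite rooted tree, let v be a vertex of U of depth h, and let ℓ be any Boolean list of length h. Then 2^h · |{α ∈ Inj(U, M_h) : α(v) = ℓ}| = |Inj(U, M_h)|. -/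
attribute [local instance] Classical.propDecidable

/-!
Flipping the bits selected by a fixed mask `m` of length `h` is an automorphism of the complete
binary tree `M_h`, and composing with it maps `Inj(U, M_h)` to itself. Taking
`m = ℓ₁ xor ℓ₂` sends the embeddings with `α v = ℓ₁` bijectively onto those with `α v = ℓ₂`, so all
`2^h` fibres of `α ↦ α v` over the leaves of `M_h` have the same size; since `α v` always has length
`depth v = h`, these fibres partition `Inj(U, M_h)`.
-/

open Set

lemma ncard_eq_ncard_mul_of_ncard_fiber_eq {α β : Type*} {s : Set α} {t : Set β} {f : α → β}
    (hs : s.Finite) (ht : t.Finite) (hf : MapsTo f s t) {n : ℕ}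
    (hfiber : ∀ b ∈ t, {a ∈ s | f a = b}.ncard = n) : s.ncard = t.ncard * n := by
  classical
  have hfiber' : ∀ b ∈ ht.toFinset, (hs.toFinset.filter fun a => f a = b).card = n := by
    intro b hb
    rw [← hfiber b (ht.mem_toFinset.1 hb), ← ncard_coe_finset]
    congr 1
    ext a
    simp
  rw [ncard_eq_toFinset_card s hs, ncard_eq_toFinset_card t ht,
    Finset.card_eq_sum_card_fiberwise (f := f) (t := ht.toFinset) (by simpa using hf),
    Finset.sum_congr rfl hfiber',
    Finset.sum_const, smul_eq_mul]

lemma ncard_setOf_length_eq (α : Type*) [Fintype α] (n : ℕ) :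
    {l : List α | l.length = n}.ncard = Fintype.card α ^ n := by
  rw [← Nat.card_coe_set_eq, ← card_vector, ← Nat.card_eq_fintype_card]
  rfl

def xorMask (m l : List Bool) : List Bool :=
  List.zipWith xor l m

lemma length_xorMask (m l : List Bool) : (xorMask m l).length = min l.length m.length :=
  List.length_zipWith

lemma xorMask_xorMask {m l : List Bool} (hl : l.length ≤ m.length) :
    xorMask m (xorMask m l) = l := by
  apply List.ext_getElem
  · simp [xorMask, hl]
  · intro i _ _
    simp [xorMask, List.getElem_zipWith]

lemma injOn_xorMask (m : List Bool) : InjOn (xorMask m) {l | l.length ≤ m.length} :=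
  LeftInvOn.injOn fun _ hl => xorMask_xorMask hl

lemma xorMask_zipWith_xor {l₁ l₂ : List Bool} (h : l₁.length = l₂.length) :
    xorMask (List.zipWith xor l₁ l₂) l₁ = l₂ := by
  apply List.ext_getElem
  · simp [xorMask, h]
  · intro i _ _
    simp [xorMask, List.getElem_zipWith]

lemma xorMask_append_singleton {m l : List Bool} (hl : l.length < m.length) (b : Bool) :
    xorMask m (l ++ [b]) = xorMask m l ++ [b ^^ m[l.length]] := by
  apply List.ext_getElem
  · simp [xorMask]
    omega
  · intro i hi _
    simp only [xorMask, List.length_zipWith, List.length_append, List.length_singleton] at hi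
    simp only [xorMask, List.getElem_zipWith, List.getElem_append, List.length_zipWith]
    split_ifs <;> grind

namespace InjM

variable {h : ℕ} {U : FiniteRootedTree} {α : U.V → List Bool}

lemma length_eq_depth (hα : α ∈ InjM h U) (u : U.V) : (α u).length = U.depth u := by
  obtain ⟨-, -, hroot, hchild⟩ := hα
  induction hd : U.depth u generalizing u with
  | zero => rw [U.root_of_depth_zero u hd, hroot, List.length_nil]
  | succ n ih =>
    have hne : u ≠ U.root := by
      rintro rfl
      simp [U.depth_root] at hd
    obtain ⟨b, hb⟩ := hchild (U.parent u) u ⟨hne, rfl⟩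
    rw [hb, List.length_append, ih (U.parent u) (by have := U.depth_parent u hne; omega)]
    rfl

lemma finite (h : ℕ) (U : FiniteRootedTree) : (InjM h U).Finite :=
  (Set.Finite.pi fun _ => List.finite_length_le Bool h).subset fun _ hα u _ => hα.2.1 u

lemma xorMask_comp_mem {m : List Bool} (hm : h ≤ m.length) (hα : α ∈ InjM h U) :
    xorMask m ∘ α ∈ InjM h U := by
  obtain ⟨hinj, hlen, hroot, hchild⟩ := hα
  refine ⟨?_, fun u => ?_, by simp [xorMask, hroot], fun u u' hu' => ?_⟩
  · exact fun u u' he => hinj (injOn_xorMask m ((hlen u).trans hm) ((hlen u').trans hm) he)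
  · exact (length_xorMask m (α u)).trans_le (min_le_of_left_le (hlen u))
  · obtain ⟨b, hb⟩ := hchild u u' hu'
    have hlt : (α u).length < m.length := by
      have := hlen u'
      simp only [hb, List.length_append, List.length_singleton] at this
      omega
    exact ⟨b ^^ m[(α u).length],
      by simp only [Function.comp_apply, hb, xorMask_append_singleton hlt]⟩

lemma ncard_fiber_le (v : U.V) {l₁ l₂ : List Bool} (h₁ : l₁.length = h) (h₂ : l₂.length = h) :
    {α ∈ InjM h U | α v = l₁}.ncard ≤ {α ∈ InjM h U | α v = l₂}.ncard := by
  set m := List.zipWith xor l₁ l₂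
  have hm : h ≤ m.length := by simp [m, h₁, h₂]
  refine ncard_le_ncard_of_injOn (fun α => xorMask m ∘ α) ?_ ?_
    ((finite h U).subset fun _ hα => hα.1)
  · rintro α ⟨hα, hαv⟩
    exact ⟨xorMask_comp_mem hm hα, by simp [hαv, m, xorMask_zipWith_xor (h₁.trans h₂.symm)]⟩
  · exact fun α hα α' hα' he => funext fun u =>
      injOn_xorMask m ((hα.1.2.1 u).trans hm) ((hα'.1.2.1 u).trans hm) (congrFun he u)

lemma ncard_fiber_eq (v : U.V) {l₁ l₂ : List Bool} (h₁ : l₁.length = h) (h₂ : l₂.length = h) :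
    {α ∈ InjM h U | α v = l₁}.ncard = {α ∈ InjM h U | α v = l₂}.ncard :=
  (ncard_fiber_le v h₁ h₂).antisymm (ncard_fiber_le v h₂ h₁)

end InjM

/-- for a vertex `v` of depth `h` and a leaf `l` of `M_h`,
`2^h · |{α ∈ Inj(U, M_h) : α v = l}| = |Inj(U, M_h)|`. -/
theorem stmt_7 (h : ℕ) (U : FiniteRootedTree) (v : U.V) (hv : U.depth v = h)
    (l : List Bool) (hl : l.length = h) :
    2 ^ h * Set.ncard {α ∈ InjM h U | α v = l} = (InjM h U).ncard := by
  have hmaps : MapsTo (fun α => α v) (InjM h U) {l' : List Bool | l'.length = h} :=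
    fun α hα => (InjM.length_eq_depth hα v).trans hv
  rw [ncard_eq_ncard_mul_of_ncard_fiber_eq (InjM.finite h U) (List.finite_length_eq Bool h) hmaps
      fun l' hl' => InjM.ncard_fiber_eq v hl' hl,
    ncard_setOf_length_eq, Fintype.card_bool]
end
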